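/- Impartial scoring play games form a non-trivial monoid under the selective sum: in particular the game i = {{0|0|0}|0|{0|0|0}} satisfies i ▽ G ≈ G for all impartial scoring games G (i.e., (i ▽ G)_F^{SL} has the same sign as G_F^{SL} and (i ▽ G)_F^{SR} has the same sign as G_F^{SR}), and i is not isomorphic to {.|0|.}, so the identity set contains more than one element. -/

import Mathlib

inductive SGame : Type where
  | mk (score : ℝ) (L R : List SGame)

namespace SGame

def score : SGame → ℝ | .mk s _ _ => s
def L : SGame → List SGame | .mk _ l _ => l
def R : SGame → List SGame | .mk _ _ r => r

mutual
  noncomputable def leftScore : SGame → ℝ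
    | .mk s l _ => WithBot.unbotD s ((l.attach.map fun x => rightScore x.1).maximum)
  termination_by g => sizeOf g
  decreasing_by
    have := List.sizeOf_lt_of_mem x.2
    simp only [SGame.mk.sizeOf_spec]
    omega
  noncomputable def rightScore : SGame → ℝ
    | .mk s _ r => WithTop.untopD s ((r.attach.map fun x => leftScore x.1).minimum)
  termination_by g => sizeOf g
  decreasing_by
    have := List.sizeOf_lt_of_mem x.2
    simp only [SGame.mk.sizeOf_spec]
    omega
end

/-- Conjunctive sum: move in all components simultaneously. -/
def conj : SGame → SGame → SGame
  | .mk s l r, .mk t l' r' =>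
    .mk (s + t)
      (l.attach.flatMap fun x => l'.attach.map fun y => conj x.1 y.1)
      (r.attach.flatMap fun x => r'.attach.map fun y => conj x.1 y.1)
termination_by G H => sizeOf G + sizeOf H
decreasing_by
  all_goals
    have h1 := List.sizeOf_lt_of_mem x.2
    have h2 := List.sizeOf_lt_of_mem y.2
    simp only [SGame.mk.sizeOf_spec]
    omega

/-- Selective sum: move in any nonempty subset of the components. -/
def sel : SGame → SGame → SGame
  | .mk s l r, .mk t l' r' =>
    .mk (s + t)
      ((l.attach.map fun x => sel x.1 (.mk t l' r')) ++
       (l'.attach.map fun y => sel (.mk s l r) y.1) ++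
       (l.attach.flatMap fun x => l'.attach.map fun y => sel x.1 y.1))
      ((r.attach.map fun x => sel x.1 (.mk t l' r')) ++
       (r'.attach.map fun y => sel (.mk s l r) y.1) ++
       (r.attach.flatMap fun x => r'.attach.map fun y => sel x.1 y.1))
termination_by G H => sizeOf G + sizeOf H
decreasing_by
  all_goals first
  | (have h1 := List.sizeOf_lt_of_mem x.2
     have h2 := List.sizeOf_lt_of_mem y.2
     simp only [SGame.mk.sizeOf_spec]; omega)
  | (have h1 := List.sizeOf_lt_of_mem x.2
     simp only [SGame.mk.sizeOf_spec]; omega)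
  | (have h2 := List.sizeOf_lt_of_mem y.2
     simp only [SGame.mk.sizeOf_spec]; omega)

/-- Add `a` points (for Left) to every score of the game. -/
def addScore (a : ℝ) : SGame → SGame
  | .mk s l r => .mk (a + s) (l.attach.map fun x => addScore a x.1)
      (r.attach.map fun x => addScore a x.1)
termination_by g => sizeOf g
decreasing_by
  all_goals
    have := List.sizeOf_lt_of_mem x.2
    simp only [SGame.mk.sizeOf_spec]; omega

/-- The negative of a game: swap the roles of Left and Right and negate all scores. -/
def neg : SGame → SGame
  | .mk s l r => .mk (-s) (r.attach.map fun x => neg x.1) (l.attach.map fun x => neg x.1)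
termination_by g => sizeOf g
decreasing_by
  all_goals
    have := List.sizeOf_lt_of_mem x.2
    simp only [SGame.mk.sizeOf_spec]; omega

/-- Impartial scoring game. -/
def Impartial : SGame → Prop
  | .mk s l r =>
    (l = [] ↔ r = []) ∧
    (∀ x ∈ l, ∃ y ∈ r, addScore (-s) x = neg (addScore (-s) y)) ∧
    (∀ x ∈ l.attach, Impartial x.1) ∧ (∀ y ∈ r.attach, Impartial y.1)
termination_by g => sizeOf g
decreasing_by
  all_goals
    first
    | (have := List.sizeOf_lt_of_mem x.2
       simp only [SGame.mk.sizeOf_spec]; omega)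
    | (have := List.sizeOf_lt_of_mem y.2
       simp only [SGame.mk.sizeOf_spec]; omega)

/-- Sequential join: play all of `G` first, then continue in `H`
    with the accumulated score. -/
def seq : SGame → SGame → SGame
  | .mk s [] [], H => addScore s H
  | .mk s l r, H =>
    .mk (s + H.score) (l.attach.map fun x => seq x.1 H)
      (r.attach.map fun x => seq x.1 H)
termination_by G _ => sizeOf G
decreasing_by
  all_goals
    have := List.sizeOf_lt_of_mem x.2
    simp only [SGame.mk.sizeOf_spec]; omega

/-- Outcome classes for scoring games. -/
inductive Outcome : Type where
  | L | R | N | P | Tie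
deriving DecidableEq

open Classical in
/-- The outcome class of a scoring game, determined by the signs of the
    optimal final scores with Left, resp. Right, moving first. -/
noncomputable def outcome (G : SGame) : Outcome :=
  if 0 < leftScore G ∧ rightScore G < 0 then .N
  else if leftScore G < 0 ∧ 0 < rightScore G then .P
  else if leftScore G = 0 ∧ rightScore G = 0 then .Tie
  else if 0 ≤ leftScore G ∧ 0 ≤ rightScore G then .L
  else .R

end SGame

/-! Impartial games are dicot: at every position either both players can move or neither can.
For dicot `H` the player to move in `{0|0|0} ▽ H` may in effect pass in `H`, so the final
scores of `{0|0|0} ▽ H` are the `max` and `min` of those of `H`. In `i ▽ H` a move in `H` alone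
leaves `i` in place, which by induction changes nothing, while a move touching `i` leaves a
position `{0|0|0} ▽ H'` that is never better for the mover; hence `i ▽ H` and `H` have the same
final scores. -/

namespace SGame

theorem leftScore_mk (s : ℝ) (l r : List SGame) :
    leftScore (mk s l r) = (l.map rightScore).maximum.unbotD s := by
  rw [leftScore]; simp

theorem rightScore_mk (s : ℝ) (l r : List SGame) :
    rightScore (mk s l r) = (r.map leftScore).minimum.untopD s := by
  rw [rightScore]; simp

theorem coe_leftScore_mk (s : ℝ) {l : List SGame} (r : List SGame) (hl : l ≠ []) :
    (leftScore (mk s l r) : WithBot ℝ) = (l.map rightScore).maximum := by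
  have hne : (l.map rightScore).maximum ≠ ⊥ := List.maximum_ne_bot_of_ne_nil (by simpa using hl)
  obtain ⟨m, hm⟩ := WithBot.ne_bot_iff_exists.1 hne
  rw [leftScore_mk, ← hm, WithBot.unbotD_coe]

theorem coe_rightScore_mk (s : ℝ) (l : List SGame) {r : List SGame} (hr : r ≠ []) :
    (rightScore (mk s l r) : WithTop ℝ) = (r.map leftScore).minimum := by
  have hne : (r.map leftScore).minimum ≠ ⊤ := List.minimum_ne_top_of_ne_nil (by simpa using hr)
  obtain ⟨m, hm⟩ := WithTop.ne_top_iff_exists.1 hne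
  rw [rightScore_mk, ← hm, WithTop.untopD_coe]

theorem leftScore_mk_le_iff {s v : ℝ} {l : List SGame} (r : List SGame) (hl : l ≠ []) :
    leftScore (mk s l r) ≤ v ↔ ∀ x ∈ l, rightScore x ≤ v := by
  rw [← WithBot.coe_le_coe, coe_leftScore_mk s r hl]
  refine ⟨fun h x hx => ?_, fun h => List.maximum_le_of_forall_le (by simpa using h)⟩
  exact WithBot.coe_le_coe.1 ((List.le_maximum_of_mem' (l.mem_map_of_mem hx)).trans h)

theorem le_rightScore_mk_iff {s v : ℝ} (l : List SGame) {r : List SGame} (hr : r ≠ []) :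
    v ≤ rightScore (mk s l r) ↔ ∀ x ∈ r, v ≤ leftScore x := by
  rw [← WithTop.coe_le_coe, coe_rightScore_mk s l hr]
  refine ⟨fun h x hx => ?_, fun h => List.le_minimum_of_forall_le (by simpa using h)⟩
  exact WithTop.coe_le_coe.1 (h.trans (List.minimum_le_of_mem' (r.mem_map_of_mem hx)))

theorem le_leftScore_mk_iff {s v : ℝ} {l : List SGame} (r : List SGame) (hl : l ≠ []) :
    v ≤ leftScore (mk s l r) ↔ ∃ x ∈ l, v ≤ rightScore x := by
  rw [← WithBot.coe_le_coe, coe_leftScore_mk s r hl, List.coe_le_maximum_iff]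
  simp

theorem rightScore_mk_le_iff {s v : ℝ} (l : List SGame) {r : List SGame} (hr : r ≠ []) :
    rightScore (mk s l r) ≤ v ↔ ∃ x ∈ r, leftScore x ≤ v := by
  rw [← WithTop.coe_le_coe, coe_rightScore_mk s l hr, List.minimum_le_coe_iff]
  simp

theorem rightScore_le_leftScore_mk {s : ℝ} {l r : List SGame} {x : SGame} (hx : x ∈ l) :
    rightScore x ≤ leftScore (mk s l r) :=
  (le_leftScore_mk_iff r (List.ne_nil_of_mem hx)).2 ⟨x, hx, le_rfl⟩

theorem rightScore_mk_le_leftScore {s : ℝ} {l r : List SGame} {x : SGame} (hx : x ∈ r) :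
    rightScore (mk s l r) ≤ leftScore x :=
  (rightScore_mk_le_iff l (List.ne_nil_of_mem hx)).2 ⟨x, hx, le_rfl⟩

theorem sel_mk (s t : ℝ) (l r l' r' : List SGame) :
    sel (mk s l r) (mk t l' r') = mk (s + t)
      (l.map (sel · (mk t l' r')) ++ l'.map (sel (mk s l r)) ++
        l.flatMap fun x => l'.map (sel x))
      (r.map (sel · (mk t l' r')) ++ r'.map (sel (mk s l r)) ++
        r.flatMap fun x => r'.map (sel x)) := by
  rw [sel]; simp

inductive Dicot : SGame → Prop
  | mk {s : ℝ} {l r : List SGame} :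
      (l = [] ↔ r = []) → (∀ x ∈ l, Dicot x) → (∀ x ∈ r, Dicot x) → Dicot (mk s l r)

theorem Impartial.dicot : ∀ {G : SGame}, Impartial G → Dicot G
  | mk s l r, h => by
    rw [Impartial] at h
    obtain ⟨hlr, -, hl, hr⟩ := h
    exact .mk hlr (fun x hx => (hl ⟨x, hx⟩ (List.mem_attach _ _)).dicot)
      (fun x hx => (hr ⟨x, hx⟩ (List.mem_attach _ _)).dicot)

def zero : SGame := mk 0 [] []
def star : SGame := mk 0 [zero] [zero]
def iota : SGame := mk 0 [star] [star]

theorem zero_sel : ∀ H : SGame, sel zero H = H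
  | mk t l r => by
    have hl : l.map (sel zero) = l := (List.map_congr_left fun x _ => zero_sel x).trans l.map_id
    have hr : r.map (sel zero) = r := (List.map_congr_left fun x _ => zero_sel x).trans r.map_id
    rw [zero] at hl hr ⊢
    simp [sel_mk, hl, hr]

theorem star_sel (t : ℝ) (l r : List SGame) :
    sel star (mk t l r) = mk t (mk t l r :: (l.map (sel star) ++ l))
      (mk t l r :: (r.map (sel star) ++ r)) := by
  conv_lhs => rw [star, sel_mk]
  simp only [zero_add, funext zero_sel, List.map_cons, List.map_nil, List.singleton_append,
    List.flatMap_cons, List.flatMap_nil, List.append_nil, List.map_id']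
  rfl

theorem iota_sel (t : ℝ) (l r : List SGame) :
    sel iota (mk t l r) = mk t (sel star (mk t l r) :: (l.map (sel iota) ++ l.map (sel star)))
      (sel star (mk t l r) :: (r.map (sel iota) ++ r.map (sel star))) := by
  conv_lhs => rw [iota, sel_mk]
  simp only [zero_add, List.map_cons, List.map_nil, List.singleton_append, List.flatMap_cons,
    List.flatMap_nil, List.append_nil]
  rfl

theorem Dicot.scores_star_sel {H : SGame} (hH : Dicot H) :
    leftScore (sel star H) = max (leftScore H) (rightScore H) ∧
      rightScore (sel star H) = min (leftScore H) (rightScore H) := by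
  induction hH with
  | @mk t l r hlr _ _ ih_l ih_r =>
  rw [star_sel]
  rcases eq_or_ne l [] with rfl | hl
  · obtain rfl := hlr.1 rfl
    simp [leftScore_mk, rightScore_mk]
  have hr : r ≠ [] := mt hlr.2 hl
  constructor
  · apply le_antisymm
    · rw [leftScore_mk_le_iff _ (List.cons_ne_nil _ _)]
      simp only [List.mem_cons, List.mem_append, List.mem_map]
      rintro x (rfl | ⟨y, hy, rfl⟩ | hx)
      · exact le_max_right _ _
      · rw [(ih_l y hy).2]
        exact le_max_of_le_left ((min_le_right _ _).trans (rightScore_le_leftScore_mk hy))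
      · exact le_max_of_le_left (rightScore_le_leftScore_mk hx)
    · refine max_le ?_ (rightScore_le_leftScore_mk List.mem_cons_self)
      obtain ⟨y, hy, hy_max⟩ := (le_leftScore_mk_iff r hl).1 le_rfl
      exact hy_max.trans (rightScore_le_leftScore_mk (by simp [hy]))
  · apply le_antisymm
    · refine le_min (rightScore_mk_le_leftScore List.mem_cons_self) ?_
      obtain ⟨y, hy, hy_min⟩ := (rightScore_mk_le_iff l hr).1 le_rfl
      exact (rightScore_mk_le_leftScore (by simp [hy])).trans hy_min
    · rw [le_rightScore_mk_iff _ (List.cons_ne_nil _ _)]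
      simp only [List.mem_cons, List.mem_append, List.mem_map]
      rintro x (rfl | ⟨y, hy, rfl⟩ | hx)
      · exact min_le_left _ _
      · rw [(ih_r y hy).1]
        exact min_le_of_right_le ((rightScore_mk_le_leftScore hy).trans (le_max_left _ _))
      · exact min_le_of_right_le (rightScore_mk_le_leftScore hx)

theorem Dicot.scores_iota_sel {H : SGame} (hH : Dicot H) :
    leftScore (sel iota H) = leftScore H ∧ rightScore (sel iota H) = rightScore H := by
  induction hH with
  | @mk t l r hlr hl_dicot hr_dicot ih_l ih_r =>
  have hH : Dicot (SGame.mk t l r) := .mk hlr hl_dicot hr_dicot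
  obtain ⟨h_left, h_right⟩ := hH.scores_star_sel
  rw [iota_sel]
  rcases eq_or_ne l [] with rfl | hl
  · obtain rfl := hlr.1 rfl
    simp_all [leftScore_mk, rightScore_mk]
  have hr : r ≠ [] := mt hlr.2 hl
  constructor
  · apply le_antisymm
    · rw [leftScore_mk_le_iff _ (List.cons_ne_nil _ _)]
      simp only [List.mem_cons, List.mem_append, List.mem_map]
      rintro x (rfl | ⟨y, hy, rfl⟩ | ⟨y, hy, rfl⟩)
      · exact h_right ▸ min_le_left _ _
      · exact (ih_l y hy).2 ▸ rightScore_le_leftScore_mk hy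
      · rw [((hl_dicot y hy).scores_star_sel).2]
        exact (min_le_right _ _).trans (rightScore_le_leftScore_mk hy)
    · obtain ⟨y, hy, hy_max⟩ := (le_leftScore_mk_iff r hl).1 le_rfl
      rw [← (ih_l y hy).2] at hy_max
      exact hy_max.trans (rightScore_le_leftScore_mk
        (List.mem_cons_of_mem _ (List.mem_append_left _ (List.mem_map_of_mem hy))))
  · apply le_antisymm
    · obtain ⟨y, hy, hy_min⟩ := (rightScore_mk_le_iff l hr).1 le_rfl
      rw [← (ih_r y hy).1] at hy_min
      exact (rightScore_mk_le_leftScore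
        (List.mem_cons_of_mem _ (List.mem_append_left _ (List.mem_map_of_mem hy)))).trans hy_min
    · rw [le_rightScore_mk_iff _ (List.cons_ne_nil _ _)]
      simp only [List.mem_cons, List.mem_append, List.mem_map]
      rintro x (rfl | ⟨y, hy, rfl⟩ | ⟨y, hy, rfl⟩)
      · exact h_left ▸ le_max_right _ _
      · exact (ih_r y hy).1 ▸ rightScore_mk_le_leftScore hy
      · rw [((hr_dicot y hy).scores_star_sel).1]
        exact (rightScore_mk_le_leftScore hy).trans (le_max_left _ _)

theorem iota_ne_zero : iota ≠ zero := by simp [iota, zero]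

end SGame

open SGame in
/-- Impartial scoring games form a non-trivial monoid under the selective sum:
the game `i = {{0|0|0}|0|{0|0|0}}` satisfies `i ▽ G ≈ G` for every impartial `G`
(the final scores of `i ▽ G` have the same signs as those of `G`), and `i` is not
isomorphic to `{.|0|.}`. -/
theorem sel_impartial_nontrivial_monoid :
    (∀ G : SGame, Impartial G →
      let i : SGame := .mk 0 [.mk 0 [.mk 0 [] []] [.mk 0 [] []]]
                            [.mk 0 [.mk 0 [] []] [.mk 0 [] []]]
      (0 < leftScore (sel i G) ↔ 0 < leftScore G) ∧
      (leftScore (sel i G) < 0 ↔ leftScore G < 0) ∧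
      (0 < rightScore (sel i G) ↔ 0 < rightScore G) ∧
      (rightScore (sel i G) < 0 ↔ rightScore G < 0)) ∧
    (SGame.mk 0 [SGame.mk 0 [SGame.mk 0 [] []] [SGame.mk 0 [] []]]
              [SGame.mk 0 [SGame.mk 0 [] []] [SGame.mk 0 [] []]] ≠ SGame.mk 0 [] []) := by
  refine ⟨fun G hG => ?_, iota_ne_zero⟩
  obtain ⟨h_left, h_right⟩ := hG.dicot.scores_iota_sel
  exact ⟨h_left ▸ .rfl, h_left ▸ .rfl, h_right ▸ .rfl, h_right ▸ .rfl⟩
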